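/- (Quotient property of Schur complements.) Let M ≥ 0 be an n×n operator matrix (or an n×n positive semidefinite complex matrix) and let J ⊆ K ⊆ {0,…,n-1}. Then S(M; J) = S(S(M; K); J), where Schur complements are viewed as n×n matrices padded with zeros outside the indexing set. -/

import Mathlib

/-!
In the Loewner order, `S(M;J)` is the greatest element of the set of positive semidefinite
matrices supported on `J × J` and lying below `M`. For `J ⊆ K` this set does not change when
`M` is replaced by `S(M;K)`: `S(M;K) ≤ M`, and conversely every such matrix is supported on
`K × K`, hence lies below `S(M;K)` by maximality. Greatest elements are unique.
-/

open scoped ComplexOrder MatrixOrder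

/-- `S` is the Schur complement of the positive semidefinite matrix `M` supported on the
rows and columns in `Λ`: the largest positive semidefinite matrix vanishing outside
`Λ × Λ` such that `M - S` is positive semidefinite. -/
def IsSchurCompl {n : ℕ} (M : Matrix (Fin n) (Fin n) ℂ) (Λ : Set (Fin n))
    (S : Matrix (Fin n) (Fin n) ℂ) : Prop :=
  S.PosSemidef ∧ (∀ i j, i ∉ Λ ∨ j ∉ Λ → S i j = 0) ∧ (M - S).PosSemidef ∧
    ∀ X : Matrix (Fin n) (Fin n) ℂ, X.PosSemidef → (∀ i j, i ∉ Λ ∨ j ∉ Λ → X i j = 0) →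
      (M - X).PosSemidef → (S - X).PosSemidef

def schurCandidates {n : ℕ} (M : Matrix (Fin n) (Fin n) ℂ) (Λ : Set (Fin n)) :
    Set (Matrix (Fin n) (Fin n) ℂ) :=
  {X | 0 ≤ X ∧ (∀ i j, i ∉ Λ ∨ j ∉ Λ → X i j = 0) ∧ X ≤ M}

section

variable {n : ℕ} {M S : Matrix (Fin n) (Fin n) ℂ} {J K : Set (Fin n)}

theorem isSchurCompl_iff_isGreatest :
    IsSchurCompl M J S ↔ IsGreatest (schurCandidates M J) S := by
  simp only [IsSchurCompl, IsGreatest, schurCandidates, upperBounds, Set.mem_ofPred_eq,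
    Matrix.le_iff, sub_zero, and_imp, and_assoc]

theorem IsSchurCompl.schurCandidates_eq (hS : IsSchurCompl M K S) (hJK : J ⊆ K) :
    schurCandidates S J = schurCandidates M J := by
  obtain ⟨⟨-, -, hSM⟩, hS_max⟩ := isSchurCompl_iff_isGreatest.1 hS
  ext X
  refine ⟨fun ⟨hX, hXJ, hXS⟩ => ⟨hX, hXJ, hXS.trans hSM⟩,
    fun ⟨hX, hXJ, hXM⟩ => ⟨hX, hXJ, hS_max ⟨hX, ?_, hXM⟩⟩⟩
  exact fun i j hij => hXJ i j (hij.imp (mt (@hJK i)) (mt (@hJK j)))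

end

theorem schur_compl_quotient {n : ℕ} (M : Matrix (Fin n) (Fin n) ℂ)
    (J K : Set (Fin n)) (hJK : J ⊆ K)
    (SK SJ S' : Matrix (Fin n) (Fin n) ℂ)
    (hSK : IsSchurCompl M K SK) (hSJ : IsSchurCompl M J SJ)
    (hS' : IsSchurCompl SK J S') :
    SJ = S' := by
  rw [isSchurCompl_iff_isGreatest] at hSJ hS'
  rw [hSK.schurCandidates_eq hJK] at hS'
  exact hSJ.unique hS'
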